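/- Consider sensors at positions a_1, …, a_m ∈ ℝ^n and an object at x^o ∈ ℝ^n, with range measurements d_i = ‖a_i − x^o‖ + r_i, where the r_i are i.i.d. real Gaussian random variables with mean 0 and variance σ² > 0. Let A be the m×(n+1) matrix whose i-th row is (−2a_i^T, 1), assume A^T A is invertible, let b ∈ ℝ^m have entries b_i = d_i² − ‖a_i‖² − σ², let ŷ = (A^T A)^{-1} A^T b (the Bias-Eli-Lin estimator), and let y^o = (x^o, ‖x^o‖²) ∈ ℝ^{n+1}. Then E[ŷ] = y^o, and E[(ŷ − y^o)(ŷ − y^o)^T] = (A^T A)^{-1} A^T Λ A (A^T A)^{-1}, where Λ is the m×m diagonal matrix with diagonal entries Λ_{ii} = 4‖a_i − x^o‖²σ² + 2σ⁴. -/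

import Mathlib

open MeasureTheory ProbabilityTheory Matrix

open scoped NNReal ENNReal

section aux
open Real

lemma BEL.poly_gauss_integrable {b : ℝ} (hb : 0 < b) (k : ℕ) :
    Integrable (fun x : ℝ => x ^ k * Real.exp (-b * x ^ 2)) := by
  have h := integrable_rpow_mul_exp_neg_mul_sq hb (s := (k : ℝ)) (by
    have : (0:ℝ) ≤ k := Nat.cast_nonneg k
    linarith)
  simpa [Real.rpow_natCast] using h

lemma BEL.Ioi_moment {b : ℝ} (hb : 0 < b) (k : ℕ) :
    ∫ x in Set.Ioi (0:ℝ), x ^ k * Real.exp (-b * x ^ 2)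
      = b ^ (-((k:ℝ) + 1) / 2) * (1 / 2) * Real.Gamma (((k:ℝ) + 1) / 2) := by
  rw [← integral_rpow_mul_exp_neg_mul_rpow (p := 2) (q := (k:ℝ)) two_pos
    (by have : (0:ℝ) ≤ k := Nat.cast_nonneg k; linarith) hb]
  refine setIntegral_congr_fun measurableSet_Ioi (fun x hx => ?_)
  rw [Real.rpow_natCast, Real.rpow_two]

lemma BEL.moment_odd {b : ℝ} {k : ℕ} (hk : Odd k) :
    ∫ x : ℝ, x ^ k * Real.exp (-b * x ^ 2) = 0 := by
  have h := integral_neg_eq_self (fun x : ℝ => x ^ k * Real.exp (-b * x ^ 2)) volume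
  simp only [hk.neg_pow, neg_sq, neg_mul] at h
  rw [integral_neg] at h
  simp only [neg_mul]
  linarith

lemma BEL.moment_even {b : ℝ} (hb : 0 < b) (k : ℕ) :
    ∫ x : ℝ, x ^ (2 * k) * Real.exp (-b * x ^ 2)
      = 2 * (b ^ (-(((2*k:ℕ):ℝ) + 1) / 2) * (1 / 2) * Real.Gamma ((((2*k:ℕ):ℝ) + 1) / 2)) := by
  rw [← BEL.Ioi_moment hb (2*k)]
  rw [← integral_comp_abs (f := fun x => x ^ (2*k) * Real.exp (-b * x ^ 2))]
  congr 1 with x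
  rw [pow_mul, pow_mul, sq_abs]

lemma BEL.sqrt_pow_eq {c : ℝ} (hc : 0 < c) (j : ℕ) :
    (c⁻¹) ^ (-(j:ℝ)/2) = Real.sqrt c ^ j := by
  have ht : (Real.sqrt c) ^ (2:ℝ) = c := by
    rw [Real.rpow_two]; exact Real.sq_sqrt hc.le
  rw [Real.inv_rpow hc.le, ← Real.rpow_neg hc.le, neg_div, neg_neg]
  conv_lhs => rw [← ht]
  rw [← Real.rpow_mul (Real.sqrt_nonneg c)]
  rw [show (2:ℝ) * ((j:ℝ)/2) = (j:ℝ) by ring, Real.rpow_natCast]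

lemma BEL.Gamma_three_halves : Real.Gamma (3/2 : ℝ) = Real.sqrt Real.pi / 2 := by
  rw [show (3/2:ℝ) = 1/2 + 1 by norm_num, Real.Gamma_add_one (by norm_num),
    Real.Gamma_one_half_eq]
  ring

lemma BEL.Gamma_five_halves : Real.Gamma (5/2 : ℝ) = 3 * Real.sqrt Real.pi / 4 := by
  rw [show (5/2:ℝ) = 3/2 + 1 by norm_num, Real.Gamma_add_one (by norm_num),
    BEL.Gamma_three_halves]
  ring

lemma BEL.moment_two_vol {b : ℝ} (hb : 0 < b) :
    ∫ x : ℝ, x ^ 2 * Real.exp (-b * x ^ 2)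
      = Real.sqrt Real.pi * Real.sqrt b⁻¹ ^ 3 / 2 := by
  have h := BEL.moment_even hb 1
  norm_num at h
  have hs : b ^ (-(3/2) : ℝ) = Real.sqrt b⁻¹ ^ 3 := by
    have h3 := BEL.sqrt_pow_eq (inv_pos.mpr hb) 3
    rw [inv_inv] at h3
    rw [← h3]; norm_num
  rw [hs, BEL.Gamma_three_halves] at h
  simp only [neg_mul] at h ⊢
  rw [h]; ring

lemma BEL.moment_four_vol {b : ℝ} (hb : 0 < b) :
    ∫ x : ℝ, x ^ 4 * Real.exp (-b * x ^ 2)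
      = 3 * Real.sqrt Real.pi * Real.sqrt b⁻¹ ^ 5 / 4 := by
  have h := BEL.moment_even hb 2
  norm_num at h
  have hs : b ^ (-(5/2) : ℝ) = Real.sqrt b⁻¹ ^ 5 := by
    have h5 := BEL.sqrt_pow_eq (inv_pos.mpr hb) 5
    rw [inv_inv] at h5
    rw [← h5]; norm_num
  rw [hs, BEL.Gamma_five_halves] at h
  simp only [neg_mul] at h ⊢
  rw [h]; ring

lemma BEL.integral_gaussianReal_eq (v : ℝ≥0) (hv : v ≠ 0) (g : ℝ → ℝ) :
    ∫ x, g x ∂(gaussianReal 0 v) = ∫ x, gaussianPDFReal 0 v x * g x := by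
  rw [gaussianReal_of_var_ne_zero 0 hv]
  have hpdf : gaussianPDF 0 v = fun x => ((gaussianPDFReal 0 v x).toNNReal : ℝ≥0∞) := rfl
  rw [hpdf, integral_withDensity_eq_integral_smul
    ((measurable_gaussianPDFReal 0 v).real_toNNReal) g]
  congr 1 with x
  rw [NNReal.smul_def, Real.coe_toNNReal _ (gaussianPDFReal_nonneg 0 v x), smul_eq_mul]

lemma BEL.integrable_gaussianReal_iff (v : ℝ≥0) (hv : v ≠ 0) (g : ℝ → ℝ) :
    Integrable g (gaussianReal 0 v) ↔ Integrable (fun x => gaussianPDFReal 0 v x * g x) := by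
  rw [gaussianReal_of_var_ne_zero 0 hv]
  have hpdf : gaussianPDF 0 v = fun x => ((gaussianPDFReal 0 v x).toNNReal : ℝ≥0∞) := rfl
  rw [hpdf, integrable_withDensity_iff_integrable_smul
    ((measurable_gaussianPDFReal 0 v).real_toNNReal)]
  constructor <;> intro h <;>
  · refine h.congr (Filter.Eventually.of_forall fun x => ?_)
    simp [NNReal.smul_def, Real.coe_toNNReal _ (gaussianPDFReal_nonneg 0 v x)]

lemma BEL.gaussianPDFReal_zero_mean (v : ℝ≥0) (x : ℝ) :
    gaussianPDFReal 0 v x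
      = (Real.sqrt (2 * Real.pi * v))⁻¹ * Real.exp (-(2*(v:ℝ))⁻¹ * x ^ 2) := by
  rw [gaussianPDFReal]
  congr 2
  rw [sub_zero]
  by_cases h : (v:ℝ) = 0
  · simp [h]
  · field_simp

lemma BEL.vpos {v : ℝ≥0} (hv : v ≠ 0) : 0 < (v:ℝ) := by
  exact_mod_cast pos_iff_ne_zero.mpr hv

lemma BEL.bpos {v : ℝ≥0} (hv : v ≠ 0) : 0 < (2*(v:ℝ))⁻¹ := by
  have := BEL.vpos hv; positivity

lemma BEL.gauss_int_pow {v : ℝ≥0} (hv : v ≠ 0) (k : ℕ) :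
    Integrable (fun x : ℝ => x ^ k) (gaussianReal 0 v) := by
  rw [BEL.integrable_gaussianReal_iff v hv]
  have heq : (fun x : ℝ => gaussianPDFReal 0 v x * x ^ k)
      = fun x => (Real.sqrt (2 * Real.pi * v))⁻¹ *
          (x ^ k * Real.exp (-(2*(v:ℝ))⁻¹ * x ^ 2)) := by
    funext x; rw [BEL.gaussianPDFReal_zero_mean]; ring
  rw [heq]
  exact (BEL.poly_gauss_integrable (BEL.bpos hv) k).const_mul _

lemma BEL.gauss_moment_eq {v : ℝ≥0} (hv : v ≠ 0) (k : ℕ) :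
    ∫ x, x ^ k ∂(gaussianReal 0 v)
      = (Real.sqrt (2 * Real.pi * v))⁻¹ *
          ∫ x : ℝ, x ^ k * Real.exp (-(2*(v:ℝ))⁻¹ * x ^ 2) := by
  rw [BEL.integral_gaussianReal_eq v hv, ← integral_const_mul]
  congr 1 with x
  rw [BEL.gaussianPDFReal_zero_mean]; ring

lemma BEL.sqrt2piv {v : ℝ≥0} :
    Real.sqrt (2 * Real.pi * v) = Real.sqrt Real.pi * Real.sqrt (2*(v:ℝ)) := by
  rw [show 2 * Real.pi * (v:ℝ) = Real.pi * (2*(v:ℝ)) by ring,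
    Real.sqrt_mul Real.pi_pos.le]

lemma BEL.gauss_moment_one {v : ℝ≥0} (hv : v ≠ 0) :
    ∫ x, x ^ 1 ∂(gaussianReal 0 v) = 0 := by
  rw [BEL.gauss_moment_eq hv 1, BEL.moment_odd ⟨0, by norm_num⟩, mul_zero]

lemma BEL.gauss_moment_three {v : ℝ≥0} (hv : v ≠ 0) :
    ∫ x, x ^ 3 ∂(gaussianReal 0 v) = 0 := by
  rw [BEL.gauss_moment_eq hv 3, BEL.moment_odd ⟨1, by norm_num⟩, mul_zero]

lemma BEL.gauss_moment_two {v : ℝ≥0} (hv : v ≠ 0) :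
    ∫ x, x ^ 2 ∂(gaussianReal 0 v) = v := by
  rw [BEL.gauss_moment_eq hv 2, BEL.moment_two_vol (BEL.bpos hv), inv_inv, BEL.sqrt2piv]
  have h2v : (0:ℝ) < 2 * v := by have := BEL.vpos hv; linarith
  set t := Real.sqrt (2*(v:ℝ)) with htdef
  have ht : t ^ 2 = 2 * v := Real.sq_sqrt h2v.le
  have htpos : 0 < t := Real.sqrt_pos.mpr h2v
  have hπ : 0 < Real.sqrt Real.pi := Real.sqrt_pos.mpr Real.pi_pos
  field_simp
  nlinarith [ht, htpos, hπ, mul_pos hπ htpos]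

lemma BEL.gauss_moment_four {v : ℝ≥0} (hv : v ≠ 0) :
    ∫ x, x ^ 4 ∂(gaussianReal 0 v) = 3 * (v:ℝ) ^ 2 := by
  rw [BEL.gauss_moment_eq hv 4, BEL.moment_four_vol (BEL.bpos hv), inv_inv, BEL.sqrt2piv]
  have h2v : (0:ℝ) < 2 * v := by have := BEL.vpos hv; linarith
  set t := Real.sqrt (2*(v:ℝ)) with htdef
  have ht : t ^ 2 = 2 * v := Real.sq_sqrt h2v.le
  have htpos : 0 < t := Real.sqrt_pos.mpr h2v
  have hπ : 0 < Real.sqrt Real.pi := Real.sqrt_pos.mpr Real.pi_pos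
  field_simp
  linear_combination (t^2+2*(v:ℝ)) * ht

/-- Integrability and integral of a degree-4 polynomial against the gaussian. -/
lemma BEL.gauss_poly_integrable {v : ℝ≥0} (hv : v ≠ 0) (c0 c1 c2 c3 c4 : ℝ) :
    Integrable (fun x : ℝ => c0 + c1 * x ^ 1 + c2 * x ^ 2 + c3 * x ^ 3 + c4 * x ^ 4)
      (gaussianReal 0 v) := by
  exact (((((integrable_const c0).add
    ((BEL.gauss_int_pow hv 1).const_mul c1)).add
    ((BEL.gauss_int_pow hv 2).const_mul c2)).add
    ((BEL.gauss_int_pow hv 3).const_mul c3)).add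
    ((BEL.gauss_int_pow hv 4).const_mul c4))

lemma BEL.gauss_poly_integral {v : ℝ≥0} (hv : v ≠ 0) (c0 c1 c2 c3 c4 : ℝ) :
    ∫ x, (c0 + c1 * x ^ 1 + c2 * x ^ 2 + c3 * x ^ 3 + c4 * x ^ 4) ∂(gaussianReal 0 v)
      = c0 + c2 * v + c4 * (3 * (v:ℝ) ^ 2) := by
  have I1 : Integrable (fun x : ℝ => c0 + c1 * x ^ 1) (gaussianReal 0 v) :=
    (integrable_const c0).add ((BEL.gauss_int_pow hv 1).const_mul c1)
  have I2 : Integrable (fun x : ℝ => c0 + c1 * x ^ 1 + c2 * x ^ 2) (gaussianReal 0 v) :=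
    I1.add ((BEL.gauss_int_pow hv 2).const_mul c2)
  have I3 : Integrable (fun x : ℝ => c0 + c1 * x ^ 1 + c2 * x ^ 2 + c3 * x ^ 3)
      (gaussianReal 0 v) :=
    I2.add ((BEL.gauss_int_pow hv 3).const_mul c3)
  rw [integral_add I3 ((BEL.gauss_int_pow hv 4).const_mul c4),
    integral_add I2 ((BEL.gauss_int_pow hv 3).const_mul c3),
    integral_add I1 ((BEL.gauss_int_pow hv 2).const_mul c2),
    integral_add (integrable_const c0) ((BEL.gauss_int_pow hv 1).const_mul c1),
    integral_const, integral_const_mul, integral_const_mul, integral_const_mul,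
    integral_const_mul, BEL.gauss_moment_one hv, BEL.gauss_moment_two hv,
    BEL.gauss_moment_three hv, BEL.gauss_moment_four hv]
  simp [measure_univ]

end aux

lemma BEL.eps_integrable {v : ℝ≥0} (hv : v ≠ 0) (c : ℝ) :
    Integrable (fun x : ℝ => 2 * c * x + x ^ 2 - (v:ℝ)) (gaussianReal 0 v) :=
  (BEL.gauss_poly_integrable hv (-(v:ℝ)) (2*c) 1 0 0).congr
    (Filter.Eventually.of_forall fun x => by ring)

lemma BEL.eps_mean {v : ℝ≥0} (hv : v ≠ 0) (c : ℝ) :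
    ∫ x, (2 * c * x + x ^ 2 - (v:ℝ)) ∂(gaussianReal 0 v) = 0 := by
  rw [integral_congr_ae (Filter.Eventually.of_forall fun x =>
    (by ring : 2 * c * x + x ^ 2 - (v:ℝ)
      = -(v:ℝ) + (2*c) * x ^ 1 + 1 * x ^ 2 + 0 * x ^ 3 + 0 * x ^ 4)),
    BEL.gauss_poly_integral hv]
  ring

lemma BEL.eps_sq_integrable {v : ℝ≥0} (hv : v ≠ 0) (c : ℝ) :
    Integrable (fun x : ℝ => (2 * c * x + x ^ 2 - (v:ℝ)) ^ 2) (gaussianReal 0 v) :=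
  (BEL.gauss_poly_integrable hv ((v:ℝ)^2) (-(4*c*(v:ℝ))) (4*c^2 - 2*(v:ℝ)) (4*c) 1).congr
    (Filter.Eventually.of_forall fun x => by ring)

lemma BEL.eps_sq_mean {v : ℝ≥0} (hv : v ≠ 0) (c : ℝ) :
    ∫ x, (2 * c * x + x ^ 2 - (v:ℝ)) ^ 2 ∂(gaussianReal 0 v)
      = 4 * c ^ 2 * (v:ℝ) + 2 * (v:ℝ) ^ 2 := by
  rw [integral_congr_ae (Filter.Eventually.of_forall fun x =>
    (by ring : (2 * c * x + x ^ 2 - (v:ℝ)) ^ 2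
      = (v:ℝ)^2 + (-(4*c*(v:ℝ))) * x ^ 1 + (4*c^2 - 2*(v:ℝ)) * x ^ 2
        + (4*c) * x ^ 3 + 1 * x ^ 4)),
    BEL.gauss_poly_integral hv]
  ring


/-- Unbiasedness and MSE of the Bias-Eli-Lin estimator: with `d_i = ‖a_i − x^o‖ + r_i`
(i.i.d. Gaussian noises of mean 0 and variance σ² > 0), `A` the matrix with rows
`(−2a_iᵀ, 1)`, `b_i = d_i² − ‖a_i‖² − σ²`, `ŷ = (AᵀA)⁻¹Aᵀb` and `y^o = (x^o, ‖x^o‖²)`,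
one has `E[ŷ] = y^o` and `E[(ŷ − y^o)(ŷ − y^o)ᵀ] = (AᵀA)⁻¹AᵀΛA(AᵀA)⁻¹` with
`Λ = diag(4‖a_i − x^o‖²σ² + 2σ⁴)`. -/
theorem bias_eli_lin_unbiased_and_mse
    {Ω : Type*} [MeasurableSpace Ω] (μ : Measure Ω) [IsProbabilityMeasure μ]
    (n m : ℕ) (a : Fin m → EuclideanSpace ℝ (Fin n)) (xo : EuclideanSpace ℝ (Fin n))
    (v : NNReal) (hv : v ≠ 0)
    (r : Fin m → Ω → ℝ) (hmeas : ∀ i, Measurable (r i))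
    (hindep : iIndepFun r μ)
    (hlaw : ∀ i, μ.map (r i) = gaussianReal 0 v)
    (d : Fin m → Ω → ℝ) (hd : ∀ i ω, d i ω = ‖a i - xo‖ + r i ω)
    (A : Matrix (Fin m) (Fin (n + 1)) ℝ)
    (hA : ∀ i, A i = Fin.snoc (fun j => -2 * a i j) 1)
    (hInv : IsUnit (Aᵀ * A).det)
    (b : Ω → Fin m → ℝ)
    (hb : ∀ ω i, b ω i = (d i ω) ^ 2 - ‖a i‖ ^ 2 - (v : ℝ))
    (yhat : Ω → Fin (n + 1) → ℝ)
    (hy : ∀ ω, yhat ω = ((Aᵀ * A)⁻¹ * Aᵀ) *ᵥ b ω)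
    (yo : Fin (n + 1) → ℝ)
    (hyo : yo = Fin.snoc (fun i => xo i) (‖xo‖ ^ 2))
    (Λ : Matrix (Fin m) (Fin m) ℝ)
    (hΛ : Λ = Matrix.diagonal
      (fun i => 4 * ‖a i - xo‖ ^ 2 * (v : ℝ) + 2 * (v : ℝ) ^ 2)) :
    (∀ j : Fin (n + 1), ∫ ω, yhat ω j ∂μ = yo j) ∧
    (∀ j k : Fin (n + 1),
      ∫ ω, (yhat ω j - yo j) * (yhat ω k - yo k) ∂μ
        = ((Aᵀ * A)⁻¹ * Aᵀ * Λ * A * (Aᵀ * A)⁻¹) j k) := by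
  -- notation
  set M : Matrix (Fin (n+1)) (Fin m) ℝ := (Aᵀ * A)⁻¹ * Aᵀ with hM
  set φ : Fin m → ℝ → ℝ := fun i x => 2 * ‖a i - xo‖ * x + x ^ 2 - (v:ℝ) with hφ
  set ε : Fin m → Ω → ℝ := fun i ω => φ i (r i ω) with hε
  have hφm : ∀ i, Measurable (φ i) := by
    intro i
    exact ((measurable_id'.const_mul _).add (measurable_id'.pow_const 2)).sub measurable_const
  -- transfer lemmas
  have hOint : ∀ (i : Fin m) (f : ℝ → ℝ), Measurable f →
      Integrable f (gaussianReal 0 v) → Integrable (fun ω => f (r i ω)) μ := by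
    intro i f hf hfi
    have h := (integrable_map_measure hf.aestronglyMeasurable (hmeas i).aemeasurable).mp
      (by rwa [hlaw i])
    exact h
  have hOeq : ∀ (i : Fin m) (f : ℝ → ℝ), Measurable f →
      (∫ ω, f (r i ω) ∂μ) = ∫ x, f x ∂(gaussianReal 0 v) := by
    intro i f hf
    rw [← hlaw i, integral_map (hmeas i).aemeasurable hf.aestronglyMeasurable]
  -- epsilon facts
  have hεint : ∀ i, Integrable (ε i) μ := fun i =>
    hOint i (φ i) (hφm i) (BEL.eps_integrable hv _)
  have hεmean : ∀ i, ∫ ω, ε i ω ∂μ = 0 := fun i => by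
    rw [hε]
    rw [hOeq i (φ i) (hφm i), hφ]
    exact BEL.eps_mean hv _
  have hεsqint : ∀ i, Integrable (fun ω => ε i ω * ε i ω) μ := by
    intro i
    have h := hOint i (fun x => (φ i x) ^ 2) ((hφm i).pow_const 2)
      (BEL.eps_sq_integrable hv _)
    exact h.congr (Filter.Eventually.of_forall fun ω => by rw [hε]; ring)
  have hεsqmean : ∀ i, ∫ ω, ε i ω * ε i ω ∂μ
      = 4 * ‖a i - xo‖ ^ 2 * (v:ℝ) + 2 * (v:ℝ) ^ 2 := by
    intro i
    have h1 : ∫ ω, ε i ω * ε i ω ∂μ = ∫ ω, (φ i (r i ω)) ^ 2 ∂μ :=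
      integral_congr_ae (Filter.Eventually.of_forall fun ω => by rw [hε]; ring)
    rw [h1, hOeq i (fun x => (φ i x) ^ 2) ((hφm i).pow_const 2), hφ]
    exact BEL.eps_sq_mean hv _
  have hεindep : ∀ i j, i ≠ j → IndepFun (ε i) (ε j) μ := by
    intro i j hij
    exact (hindep.indepFun hij).comp (hφm i) (hφm j)
  have hprodint : ∀ i j, Integrable (fun ω => ε i ω * ε j ω) μ := by
    intro i j
    by_cases hij : i = j
    · subst hij; exact hεsqint i
    · exact (hεindep i j hij).integrable_mul (hεint i) (hεint j)
  have hprodmean : ∀ i j, ∫ ω, ε i ω * ε j ω ∂μ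
      = if i = j then 4 * ‖a i - xo‖ ^ 2 * (v:ℝ) + 2 * (v:ℝ) ^ 2 else 0 := by
    intro i j
    by_cases hij : i = j
    · subst hij; rw [if_pos rfl]; exact hεsqmean i
    · rw [if_neg hij]
      have h := (hεindep i j hij).integral_fun_mul_eq_mul_integral (hεint i).aestronglyMeasurable (hεint j).aestronglyMeasurable
      have h2 : ∫ ω, ε i ω * ε j ω ∂μ = (∫ ω, ε i ω ∂μ) * ∫ ω, ε j ω ∂μ := h
      rw [h2, hεmean i, hεmean j, mul_zero]
  -- linear algebra
  have hMA : M * A = 1 := by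
    rw [hM, Matrix.mul_assoc, Matrix.nonsing_inv_mul _ hInv]
  have hkey : ∀ ω (j : Fin (n+1)), yhat ω j - yo j = ∑ i, M j i * ε i ω := by
    intro ω j
    have hbeq : b ω = A *ᵥ yo + fun i => ε i ω := by
      funext i
      simp only [Pi.add_apply, Matrix.mulVec, dotProduct]
      rw [hb ω i, hd i ω, Fin.sum_univ_castSucc]
      simp only [hA i, hyo, Fin.snoc_castSucc, Fin.snoc_last]
      have hns : ‖a i - xo‖ ^ 2 = ‖a i‖ ^ 2 - 2 * (∑ l, a i l * xo l) + ‖xo‖ ^ 2 := by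
        have hinner : (inner ℝ (a i) xo : ℝ) = ∑ l, a i l * xo l := by
          simp [PiLp.inner_apply, RCLike.inner_apply, conj_trivial, mul_comm]
        rw [← hinner]
        exact norm_sub_sq_real (a i) xo
      rw [hε, hφ]
      simp only
      have hsum : ∑ l : Fin n, -2 * a i l * xo l = -2 * ∑ l : Fin n, a i l * xo l := by
        rw [Finset.mul_sum]; exact Finset.sum_congr rfl fun l _ => by ring
      rw [hsum]
      linear_combination hns
    rw [hy ω, hbeq, Matrix.mulVec_add, Matrix.mulVec_mulVec, hMA, Matrix.one_mulVec]
    simp only [Pi.add_apply, Matrix.mulVec, dotProduct]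
    ring
  -- Part 1
  constructor
  · intro j
    have heq : ∀ ω, yhat ω j = yo j + ∑ i, M j i * ε i ω := by
      intro ω; have := hkey ω j; linarith
    rw [integral_congr_ae (Filter.Eventually.of_forall heq),
      integral_add (integrable_const _)
        (integrable_finset_sum _ fun i _ => (hεint i).const_mul _),
      integral_finset_sum _ (fun i _ => (hεint i).const_mul _)]
    simp only [integral_const_mul]
    simp [hεmean, measure_univ]
  -- Part 2
  · intro j k
    have heq : ∀ ω, (yhat ω j - yo j) * (yhat ω k - yo k)
        = ∑ i, ∑ l, (M j i * M k l) * (ε i ω * ε l ω) := by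
      intro ω
      rw [hkey ω j, hkey ω k, Finset.sum_mul_sum]
      exact Finset.sum_congr rfl fun i _ => Finset.sum_congr rfl fun l _ => by ring
    rw [integral_congr_ae (Filter.Eventually.of_forall heq),
      integral_finset_sum _ (fun i _ =>
        integrable_finset_sum _ fun l _ => (hprodint i l).const_mul _)]
    have hin : ∀ i : Fin m, ∫ ω, ∑ l, (M j i * M k l) * (ε i ω * ε l ω) ∂μ
        = ∑ l, (M j i * M k l) * ∫ ω, ε i ω * ε l ω ∂μ := by
      intro i
      rw [integral_finset_sum _ (fun l _ => (hprodint i l).const_mul _)]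
      exact Finset.sum_congr rfl fun l _ => integral_const_mul _ _
    simp only [hin, hprodmean, mul_ite, mul_zero]
    simp only [Finset.sum_ite_eq, Finset.mem_univ, if_true]
    -- now RHS
    have hsym : A * (Aᵀ * A)⁻¹ = Mᵀ := by
      rw [hM, transpose_mul, transpose_nonsing_inv, transpose_mul, transpose_transpose]
    have hR : (Aᵀ * A)⁻¹ * Aᵀ * Λ * A * (Aᵀ * A)⁻¹ = M * Λ * Mᵀ := by
      rw [hM, Matrix.mul_assoc ((Aᵀ * A)⁻¹ * Aᵀ * Λ), hsym]
    rw [hR, hΛ]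
    rw [Matrix.mul_apply]
    simp only [Matrix.mul_diagonal, Matrix.transpose_apply]
    exact Finset.sum_congr rfl fun i _ => by ring
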